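/- Let F : [0,∞) → ℝ be a cumulative distribution function of a nonnegative random variable (F nondecreasing, F(0) = 0, F(t) → 1 as t → ∞), continuously differentiable on [0,∞), satisfying the renewal equation F(t) = 2t/(1+t)³ + ∫₀ᵗ 2/(1+(t−y))³ · F(y) dy for all t ≥ 0. Then t(1 − F(t)) → 1 as t → ∞. -/

import Mathlib

/-!
Put `u = 1 - F`. Integrating the renewal equation over `[0, T]` and exchanging the order of
integration in the convolution term gives the identity
`∫₀ᵀ u(t) / (1 + T - t)² dt = T / (1 + T)²`, whose kernel has total mass `T / (1 + T)` and is
concentrated near `t = T`. As `u` is nonincreasing, bounding `u(t) ≥ u(T)` under the integral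
yields `u(T) ≤ 1 / (1 + T)`. Conversely, splitting the integral at `T / 2` and `T - A`, this upper
bound makes the first two pieces `o(1/T)` and `≤ 2 / ((1 + A) T)`, while the last is at most
`u(T - A) A / (1 + A)`; hence `liminf s u(s) ≥ 1 - 1/A` for every `A > 0`.
-/

open MeasureTheory Filter Set

open intervalIntegral Topology

theorem integral_integral_swap_triangle {E : Type*} [NormedAddCommGroup E] [NormedSpace ℝ E]
    [CompleteSpace E] {f : ℝ → ℝ → E} {a b : ℝ} (hab : a ≤ b)
    (hf : IntegrableOn (Function.uncurry f) (Ioc a b ×ˢ Ioc a b)) :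
    ∫ t in a..b, ∫ y in a..t, f t y = ∫ y in a..b, ∫ t in y..b, f t y := by
  set g : ℝ → ℝ → E := fun t y => (Ioi y).indicator (f · y) t
  have hg : Integrable (Function.uncurry g)
      ((volume.restrict (Ioc a b)).prod (volume.restrict (Ioc a b))) := by
    rw [Measure.prod_restrict, ← Measure.volume_eq_prod]
    exact hf.indicator (measurableSet_lt measurable_snd measurable_fst)
  rw [integral_of_le hab, integral_of_le hab]
  convert integral_integral_swap hg using 1 <;>
    refine setIntegral_congr_fun measurableSet_Ioc fun x hx => ?_
  · have hgx : g x = (Iio x).indicator (f x) := funext fun y => by simp [g, indicator]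
    have hIoo : Ioc a b ∩ Iio x = Ioo a x :=
      Set.ext fun y => ⟨fun h => ⟨h.1.1, h.2⟩, fun h => ⟨⟨h.1, h.2.le.trans hx.2⟩, h.2⟩⟩
    rw [hgx, setIntegral_indicator measurableSet_Iio, hIoo, integral_of_le hx.1.le,
      integral_Ioc_eq_integral_Ioo]
  · rw [setIntegral_indicator measurableSet_Ioi, Ioc_inter_Ioi, max_eq_right hx.1.le,
      integral_of_le hx.2]

theorem integral_integral_convolution {k F : ℝ → ℝ} {a b : ℝ} (hab : a ≤ b) (hk : Continuous k)
    (hF : IntervalIntegrable F volume a b) :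
    ∫ t in a..b, ∫ y in a..t, k (t - y) * F y = ∫ y in a..b, (∫ s in 0..b - y, k s) * F y := by
  have hF' : Integrable (fun p : ℝ × ℝ => F p.2)
      ((volume.restrict (Ioc a b)).prod (volume.restrict (Ioc a b))) :=
    ((intervalIntegrable_iff_integrableOn_Ioc_of_le hab).1 hF).comp_snd _
  rw [Measure.prod_restrict, ← Measure.volume_eq_prod] at hF'
  rw [integral_integral_swap_triangle hab]
  · simp only [intervalIntegral.integral_mul_const, integral_comp_sub_right, sub_self]
  · exact IntegrableOn.continuousOn_mul_of_subset (hk.comp (by fun_prop)).continuousOn hF'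
      (isCompact_Icc.prod isCompact_Icc) (measurableSet_Ioc.prod measurableSet_Ioc)
      (prod_mono Ioc_subset_Icc_self Ioc_subset_Icc_self)

theorem continuousOn_inv_one_add_sub_sq {a b T : ℝ} (hab : a ≤ b) (hb : b < 1 + T) :
    ContinuousOn (fun t => ((1 + T - t) ^ 2)⁻¹) (uIcc a b) :=
  ContinuousOn.inv₀ (by fun_prop) fun t ht => by
    rw [uIcc_of_le hab] at ht
    exact (pow_pos (by linarith [ht.2]) 2).ne'

theorem integral_inv_one_add_sub_sq {a b T : ℝ} (hab : a ≤ b) (hb : b < 1 + T) :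
    ∫ t in a..b, ((1 + T - t) ^ 2)⁻¹ = (1 + T - b)⁻¹ - (1 + T - a)⁻¹ := by
  have hpos : ∀ t ∈ uIcc a b, 0 < 1 + T - t := fun t ht => by
    rw [uIcc_of_le hab] at ht; linarith [ht.2]
  have hderiv : ∀ t ∈ uIcc a b, HasDerivAt (fun t => (1 + T - t)⁻¹) ((1 + T - t) ^ 2)⁻¹ t :=
    fun t ht => (((hasDerivAt_id t).const_sub (1 + T)).inv (hpos t ht).ne').congr_deriv (by simp)
  exact integral_eq_sub_of_hasDerivAt hderiv
    (continuousOn_inv_one_add_sub_sq hab hb).intervalIntegrable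

theorem integral_two_div_one_add_abs_pow_three {x : ℝ} (hx : 0 ≤ x) :
    ∫ s in 0..x, 2 / (1 + |s|) ^ 3 = 1 - ((1 + x) ^ 2)⁻¹ := by
  have hnonneg : ∀ s ∈ uIcc 0 x, 0 ≤ s := fun s hs => by
    rw [uIcc_of_le hx] at hs; exact hs.1
  have hderiv : ∀ s ∈ uIcc 0 x, HasDerivAt (fun s => -((1 + s) ^ 2)⁻¹) (2 / (1 + |s|) ^ 3) s :=
    fun s hs => by
      have h1 : 0 < 1 + s := by linarith [hnonneg s hs]
      refine ((((hasDerivAt_id s).const_add 1).pow 2).inv (pow_pos h1 2).ne').neg.congr_deriv ?_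
      rw [abs_of_nonneg (hnonneg s hs)]
      simp only [Pi.pow_apply, id]
      field_simp
      ring
  rw [integral_eq_sub_of_hasDerivAt hderiv <| ContinuousOn.intervalIntegrable <|
    ContinuousOn.div continuousOn_const (by fun_prop) fun s _ => by positivity]
  norm_num
  ring

theorem integral_two_mul_div_one_add_pow_three {T : ℝ} (hT : 0 ≤ T) :
    ∫ t in 0..T, 2 * t / (1 + t) ^ 3 = T ^ 2 / (1 + T) ^ 2 := by
  have hpos : ∀ t ∈ uIcc 0 T, 0 < 1 + t := fun t ht => by
    rw [uIcc_of_le hT] at ht; linarith [ht.1]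
  have hderiv : ∀ t ∈ uIcc 0 T,
      HasDerivAt (fun t => t ^ 2 / (1 + t) ^ 2) (2 * t / (1 + t) ^ 3) t := fun t ht => by
    refine (((hasDerivAt_id t).pow 2).div (((hasDerivAt_id t).const_add 1).pow 2)
      (pow_pos (hpos t ht) 2).ne').congr_deriv ?_
    simp only [Pi.pow_apply, id]
    field_simp [(hpos t ht).ne']
    ring
  rw [integral_eq_sub_of_hasDerivAt hderiv <| ContinuousOn.intervalIntegrable <|
    ContinuousOn.div (by fun_prop) (by fun_prop) fun t ht => (pow_pos (hpos t ht) 3).ne']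
  norm_num

theorem continuousOn_inv_one_add {x : ℝ} (hx : 0 ≤ x) :
    ContinuousOn (fun t => (1 + t)⁻¹) (uIcc 0 x) :=
  ContinuousOn.inv₀ (by fun_prop) fun t ht => by
    rw [uIcc_of_le hx] at ht
    exact (show 0 < 1 + t by linarith [ht.1]).ne'

theorem integral_inv_one_add {x : ℝ} (hx : -1 < x) :
    ∫ t in 0..x, (1 + t)⁻¹ = Real.log (1 + x) := by
  rw [integral_comp_add_left (fun t => t⁻¹), integral_inv_of_pos] <;> norm_num
  linarith

theorem integral_one_sub_div_sq_of_renewal {F : ℝ → ℝ} {T : ℝ} (hT : 0 ≤ T)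
    (hF : IntervalIntegrable F volume 0 T)
    (hren : ∀ t ∈ Icc 0 T, F t = 2 * t / (1 + t) ^ 3 + ∫ y in 0..t, 2 / (1 + (t - y)) ^ 3 * F y) :
    ∫ t in 0..T, (1 - F t) / (1 + T - t) ^ 2 = T / (1 + T) ^ 2 := by
  -- `|s|` extends the kernel continuously to all of `ℝ`; only `s ≥ 0` ever matters.
  have hk : Continuous fun s : ℝ => 2 / (1 + |s|) ^ 3 :=
    continuous_const.div (by fun_prop) fun s => by positivity
  have hw := continuousOn_inv_one_add_sub_sq hT (show T < 1 + T by linarith)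
  have hg : IntervalIntegrable (fun t => 2 * t / (1 + t) ^ 3) volume 0 T :=
    ContinuousOn.intervalIntegrable <| ContinuousOn.div (by fun_prop) (by fun_prop)
      fun t ht => by rw [uIcc_of_le hT] at ht; exact (pow_pos (by linarith [ht.1]) 3).ne'
  have hFw : IntervalIntegrable (fun t => F t * ((1 + T - t) ^ 2)⁻¹) volume 0 T :=
    hF.mul_continuousOn hw
  have hconv : ∫ t in 0..T, (F t - 2 * t / (1 + t) ^ 3) =
      ∫ y in 0..T, (1 - ((1 + T - y) ^ 2)⁻¹) * F y := by
    calc ∫ t in 0..T, (F t - 2 * t / (1 + t) ^ 3)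
        = ∫ t in 0..T, ∫ y in 0..t, 2 / (1 + |t - y|) ^ 3 * F y := by
          refine integral_congr fun t ht => ?_
          rw [uIcc_of_le hT] at ht
          rw [hren t ht, add_sub_cancel_left]
          refine integral_congr fun y hy => ?_
          rw [uIcc_of_le ht.1] at hy
          rw [abs_of_nonneg (sub_nonneg.2 hy.2)]
      _ = ∫ y in 0..T, (∫ s in 0..T - y, 2 / (1 + |s|) ^ 3) * F y :=
          integral_integral_convolution hT hk hF
      _ = ∫ y in 0..T, (1 - ((1 + T - y) ^ 2)⁻¹) * F y := by
          refine integral_congr fun y hy => ?_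
          rw [uIcc_of_le hT] at hy
          rw [integral_two_div_one_add_abs_pow_three (sub_nonneg.2 hy.2), add_sub_assoc]
  have hFw_eq : ∫ t in 0..T, F t * ((1 + T - t) ^ 2)⁻¹ = T ^ 2 / (1 + T) ^ 2 := by
    have hsplit : ∫ y in 0..T, (1 - ((1 + T - y) ^ 2)⁻¹) * F y =
        (∫ t in 0..T, F t) - ∫ t in 0..T, F t * ((1 + T - t) ^ 2)⁻¹ := by
      rw [← integral_sub hF hFw]
      exact integral_congr fun t _ => by ring
    rw [integral_sub hF hg, hsplit, integral_two_mul_div_one_add_pow_three hT] at hconv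
    linarith
  have hsplit : ∫ t in 0..T, (1 - F t) / (1 + T - t) ^ 2 =
      (∫ t in 0..T, ((1 + T - t) ^ 2)⁻¹) - ∫ t in 0..T, F t * ((1 + T - t) ^ 2)⁻¹ := by
    rw [← integral_sub (hw.intervalIntegrable) hFw]
    exact integral_congr fun t _ => by ring
  rw [hsplit, hFw_eq, integral_inv_one_add_sub_sq hT (by linarith), add_sub_cancel_right,
    sub_zero, inv_one]
  have : 0 < 1 + T := by linarith
  field_simp
  ring

theorem tendsto_self_div_const_add_atTop (c : ℝ) : Tendsto (fun x => x / (c + x)) atTop (𝓝 1) := by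
  have h : Tendsto (fun x => 1 - c / (c + x)) atTop (𝓝 (1 - 0)) :=
    tendsto_const_nhds.sub <|
      tendsto_const_nhds.div_atTop (tendsto_atTop_add_const_left _ c tendsto_id)
  rw [sub_zero] at h
  refine h.congr' ?_
  filter_upwards [eventually_gt_atTop (-c)] with x hx
  have : c + x ≠ 0 := by linarith
  field_simp
  ring

theorem Filter.Tendsto.mul_comp_add_const {h : ℝ → ℝ} {L : ℝ}
    (hh : Tendsto (fun x => x * h x) atTop (𝓝 L)) (A : ℝ) :
    Tendsto (fun x => x * h (x + A)) atTop (𝓝 L) := by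
  have := (tendsto_self_div_const_add_atTop A).mul
    (hh.comp (tendsto_atTop_add_const_right _ A tendsto_id))
  rw [one_mul] at this
  refine this.congr' ?_
  filter_upwards [eventually_gt_atTop (-A)] with x hx
  have : A + x ≠ 0 := by linarith
  simp only [Function.comp_apply, id]
  field_simp
  ring

theorem tendsto_mul_sub_log_div_sq_sub_inv (A : ℝ) :
    Tendsto (fun T => T * (T / (1 + T) ^ 2 - Real.log (1 + T / 2) / (1 + T / 2) ^ 2 -
      ((1 + A) * (1 + T / 2))⁻¹)) atTop (𝓝 (1 - 2 / (1 + A))) := by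
  have hhalf : Tendsto (fun T : ℝ => T / 2 / (1 + T / 2)) atTop (𝓝 1) :=
    (tendsto_self_div_const_add_atTop 1).comp (tendsto_id.atTop_div_const two_pos)
  have h1 : Tendsto (fun T : ℝ => T * (T / (1 + T) ^ 2)) atTop (𝓝 1) := by
    simpa using ((tendsto_self_div_const_add_atTop 1).pow 2).congr fun T => by rw [div_pow]; ring
  have hlog : Tendsto (fun x => Real.log x / x) atTop (𝓝 0) :=
    Real.isLittleO_log_id_atTop.tendsto_div_nhds_zero
  have h2 : Tendsto (fun T : ℝ => T * (Real.log (1 + T / 2) / (1 + T / 2) ^ 2)) atTop (𝓝 0) := by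
    have := (hhalf.const_mul 2).mul (hlog.comp <|
      tendsto_atTop_add_const_left _ 1 (tendsto_id.atTop_div_const two_pos))
    rw [mul_zero] at this
    refine this.congr fun T => ?_
    simp only [Function.comp_apply, id]
    rw [sq, ← div_div]
    ring
  have h3 : Tendsto (fun T : ℝ => T * ((1 + A) * (1 + T / 2))⁻¹) atTop (𝓝 (2 / (1 + A))) := by
    simpa using (hhalf.const_mul (2 / (1 + A))).congr fun T => by ring
  simpa only [mul_sub, sub_zero] using (h1.sub h2).sub h3

section Tauberian

variable {u : ℝ → ℝ}

theorem AntitoneOn.intervalIntegrable_div_one_add_sub_sq (hu : AntitoneOn u (Ici 0))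
    {a b T : ℝ} (ha : 0 ≤ a) (hab : a ≤ b) (hb : b < 1 + T) :
    IntervalIntegrable (fun t => u t / (1 + T - t) ^ 2) volume a b := by
  have hsub : uIcc a b ⊆ Ici 0 := by
    rw [uIcc_of_le hab]; exact fun t ht => ha.trans ht.1
  exact (hu.mono hsub).intervalIntegrable.mul_continuousOn
    (continuousOn_inv_one_add_sub_sq hab hb)

theorem le_inv_one_add_of_integral_div_sq_eq (hu : AntitoneOn u (Ici 0)) {T : ℝ} (hT : 0 < T)
    (hid : ∫ t in 0..T, u t / (1 + T - t) ^ 2 = T / (1 + T) ^ 2) : u T ≤ (1 + T)⁻¹ := by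
  have hmono : ∫ t in 0..T, u T / (1 + T - t) ^ 2 ≤ T / (1 + T) ^ 2 := by
    rw [← hid]
    refine integral_mono_on hT.le
      (antitoneOn_const.intervalIntegrable_div_one_add_sub_sq le_rfl hT.le (by linarith))
      (hu.intervalIntegrable_div_one_add_sub_sq le_rfl hT.le (by linarith)) fun t ht => ?_
    have : 0 < 1 + T - t := by linarith [ht.2]
    gcongr
    exact hu ht.1 hT.le ht.2
  simp_rw [div_eq_mul_inv (u T)] at hmono
  rw [intervalIntegral.integral_const_mul, integral_inv_one_add_sub_sq hT.le (by linarith),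
    add_sub_cancel_right, sub_zero, inv_one] at hmono
  have h1T : 0 < 1 + T := by linarith
  have hlhs : u T * (1 - (1 + T)⁻¹) = T / (1 + T) * u T := by field_simp; ring
  have hrhs : T / (1 + T) ^ 2 = T / (1 + T) * (1 + T)⁻¹ := by field_simp
  rw [hlhs, hrhs] at hmono
  exact le_of_mul_le_mul_left hmono (by positivity)

theorem integral_zero_half_div_sq_le (hu : AntitoneOn u (Ici 0))
    (hub : ∀ t > 0, u t ≤ (1 + t)⁻¹) {T : ℝ} (hT : 0 ≤ T) :
    ∫ t in 0..T / 2, u t / (1 + T - t) ^ 2 ≤ Real.log (1 + T / 2) / (1 + T / 2) ^ 2 := by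
  have hT2 : 0 ≤ T / 2 := by linarith
  calc ∫ t in 0..T / 2, u t / (1 + T - t) ^ 2
      ≤ ∫ t in 0..T / 2, (1 + t)⁻¹ / (1 + T / 2) ^ 2 := by
        refine integral_mono_on_of_le_Ioo hT2
          (hu.intervalIntegrable_div_one_add_sub_sq le_rfl hT2 (by linarith))
          ((continuousOn_inv_one_add hT2).intervalIntegrable.div_const _) fun t ht => ?_
        have h1 : 1 + T / 2 ≤ 1 + T - t := by linarith [ht.2]
        calc u t / (1 + T - t) ^ 2 ≤ (1 + t)⁻¹ / (1 + T - t) ^ 2 := by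
              gcongr; exact hub t ht.1
          _ ≤ (1 + t)⁻¹ / (1 + T / 2) ^ 2 := by
              have : 0 < 1 + t := by linarith [ht.1]
              gcongr
    _ = Real.log (1 + T / 2) / (1 + T / 2) ^ 2 := by
        rw [intervalIntegral.integral_div, integral_inv_one_add (by linarith)]

theorem integral_half_sub_div_sq_le (hu : AntitoneOn u (Ici 0))
    (hub : ∀ t > 0, u t ≤ (1 + t)⁻¹) {A T : ℝ} (hA : 0 ≤ A) (hAT : 2 * A ≤ T) (hT : 0 < T) :
    ∫ t in T / 2..T - A, u t / (1 + T - t) ^ 2 ≤ ((1 + A) * (1 + T / 2))⁻¹ := by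
  have hT2 : T / 2 ≤ T - A := by linarith
  calc ∫ t in T / 2..T - A, u t / (1 + T - t) ^ 2
      ≤ ∫ t in T / 2..T - A, (1 + T / 2)⁻¹ / (1 + T - t) ^ 2 := by
        refine integral_mono_on hT2
          (hu.intervalIntegrable_div_one_add_sub_sq (by linarith) hT2 (by linarith))
          (antitoneOn_const.intervalIntegrable_div_one_add_sub_sq (by linarith) hT2
            (by linarith)) fun t ht => ?_
        have : 0 < 1 + T - t := by linarith [ht.2]
        gcongr
        calc u t ≤ (1 + t)⁻¹ := hub t (by linarith [ht.1])
          _ ≤ (1 + T / 2)⁻¹ := by gcongr; exact ht.1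
    _ = (1 + T / 2)⁻¹ * ((1 + A)⁻¹ - (1 + T / 2)⁻¹) := by
        simp_rw [div_eq_mul_inv ((1 + T / 2)⁻¹)]
        rw [intervalIntegral.integral_const_mul, integral_inv_one_add_sub_sq hT2 (by linarith)]
        ring_nf
    _ ≤ ((1 + A) * (1 + T / 2))⁻¹ := by
        have : 0 < (1 + T / 2)⁻¹ := by positivity
        rw [mul_inv, mul_comm]
        nlinarith

theorem integral_sub_div_sq_le (hu : AntitoneOn u (Ici 0)) {A T : ℝ} (hA : 0 ≤ A)
    (hAT : A ≤ T) :
    ∫ t in T - A..T, u t / (1 + T - t) ^ 2 ≤ u (T - A) * (1 - (1 + A)⁻¹) := by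
  have hTA : T - A ≤ T := by linarith
  calc ∫ t in T - A..T, u t / (1 + T - t) ^ 2
      ≤ ∫ t in T - A..T, u (T - A) / (1 + T - t) ^ 2 := by
        refine integral_mono_on hTA
          (hu.intervalIntegrable_div_one_add_sub_sq (by linarith) hTA (by linarith))
          (antitoneOn_const.intervalIntegrable_div_one_add_sub_sq (by linarith) hTA
            (by linarith)) fun t ht => ?_
        have : 0 < 1 + T - t := by linarith [ht.2]
        have hTA0 : 0 ≤ T - A := by linarith
        gcongr
        exact hu hTA0 (hTA0.trans ht.1) ht.1
    _ = u (T - A) * (1 - (1 + A)⁻¹) := by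
        simp_rw [div_eq_mul_inv (u (T - A))]
        rw [intervalIntegral.integral_const_mul, integral_inv_one_add_sub_sq hTA (by linarith)]
        ring_nf

theorem sub_le_mul_of_integral_div_sq_eq (hu : AntitoneOn u (Ici 0))
    (hub : ∀ t > 0, u t ≤ (1 + t)⁻¹) {A T : ℝ} (hA : 0 ≤ A) (hAT : 2 * A ≤ T) (hT : 0 < T)
    (hid : ∫ t in 0..T, u t / (1 + T - t) ^ 2 = T / (1 + T) ^ 2) :
    T / (1 + T) ^ 2 - Real.log (1 + T / 2) / (1 + T / 2) ^ 2 - ((1 + A) * (1 + T / 2))⁻¹ ≤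
      u (T - A) * (1 - (1 + A)⁻¹) := by
  have hint : ∀ a b, 0 ≤ a → a ≤ b → b ≤ T →
      IntervalIntegrable (fun t => u t / (1 + T - t) ^ 2) volume a b :=
    fun a b ha hab hb => hu.intervalIntegrable_div_one_add_sub_sq ha hab (by linarith)
  have hsplit : ∫ t in 0..T, u t / (1 + T - t) ^ 2 = (∫ t in 0..T / 2, u t / (1 + T - t) ^ 2) +
      (∫ t in T / 2..T - A, u t / (1 + T - t) ^ 2) + ∫ t in T - A..T, u t / (1 + T - t) ^ 2 := by
    rw [integral_add_adjacent_intervals (hint _ _ le_rfl (by linarith) (by linarith))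
        (hint _ _ (by linarith) (by linarith) (by linarith)),
      integral_add_adjacent_intervals (hint _ _ le_rfl (by linarith) (by linarith))
        (hint _ _ (by linarith) (by linarith) le_rfl)]
  have := integral_zero_half_div_sq_le hu hub hT.le
  have := integral_half_sub_div_sq_le hu hub hA hAT hT
  have := integral_sub_div_sq_le hu hA (by linarith : A ≤ T)
  linarith

theorem eventually_lt_mul_of_integral_div_sq_eq (hu : AntitoneOn u (Ici 0))
    (hid : ∀ T > 0, ∫ t in 0..T, u t / (1 + T - t) ^ 2 = T / (1 + T) ^ 2) {c : ℝ} (hc : c < 1) :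
    ∀ᶠ s in atTop, c < s * u s := by
  have hub (t : ℝ) (ht : 0 < t) : u t ≤ (1 + t)⁻¹ :=
    le_inv_one_add_of_integral_div_sq_eq hu ht (hid t ht)
  set A := 2 / (1 - c) with hAdef
  have hA : 0 < A := div_pos two_pos (sub_pos.2 hc)
  have hcA : c < (1 + A) / A * (1 - 2 / (1 + A)) := by
    have : (1 + A) / A * (1 - 2 / (1 + A)) = 1 - A⁻¹ := by field_simp; ring
    rw [this, hAdef, inv_div]
    linarith
  have hlim := ((tendsto_mul_sub_log_div_sq_sub_inv A).mul_comp_add_const A).const_mul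
    ((1 + A) / A)
  filter_upwards [hlim.eventually (lt_mem_nhds hcA), eventually_gt_atTop A] with s hlt hs
  have hlow := sub_le_mul_of_integral_div_sq_eq hu hub hA.le (by linarith : 2 * A ≤ s + A)
    (by linarith) (hid _ (by linarith))
  rw [add_sub_cancel_right] at hlow
  have hs0 : 0 ≤ s := by linarith
  calc c < _ := hlt
    _ ≤ (1 + A) / A * (s * (u s * (1 - (1 + A)⁻¹))) := by gcongr
    _ = s * u s := by field_simp; ring

theorem tendsto_mul_of_antitoneOn_of_integral_div_sq_eq (hu : AntitoneOn u (Ici 0))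
    (hid : ∀ T > 0, ∫ t in 0..T, u t / (1 + T - t) ^ 2 = T / (1 + T) ^ 2) :
    Tendsto (fun t => t * u t) atTop (𝓝 1) := by
  refine tendsto_order.2 ⟨fun c hc => eventually_lt_mul_of_integral_div_sq_eq hu hid hc,
    fun c hc => ?_⟩
  filter_upwards [eventually_gt_atTop 0] with t ht
  calc t * u t ≤ t * (1 + t)⁻¹ :=
        mul_le_mul_of_nonneg_left (le_inv_one_add_of_integral_div_sq_eq hu ht (hid t ht)) ht.le
    _ < 1 := by rw [← div_eq_mul_inv, div_lt_one (by linarith)]; linarith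
    _ < c := hc

end Tauberian

theorem tail_asymptotic_general
    (F : ℝ → ℝ)
    (hmono : ∀ a b : ℝ, 0 ≤ a → a ≤ b → F a ≤ F b)
    (hrenewal : ∀ t, 0 ≤ t →
      F t = 2 * t / (1 + t) ^ 3 + ∫ y in (0:ℝ)..t, 2 / (1 + (t - y)) ^ 3 * F y) :
    Filter.Tendsto (fun t : ℝ => t * (1 - F t)) atTop (nhds 1) := by
  have hF : MonotoneOn F (Ici 0) := fun a ha b _ hab => hmono a b ha hab
  have hu : AntitoneOn (fun t => 1 - F t) (Ici 0) := fun a ha b hb hab =>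
    sub_le_sub_left (hF ha hb hab) 1
  have hint (T : ℝ) (hT : 0 ≤ T) : IntervalIntegrable F volume 0 T :=
    (hF.mono (by rw [uIcc_of_le hT]; exact Icc_subset_Ici_self)).intervalIntegrable
  exact tendsto_mul_of_antitoneOn_of_integral_div_sq_eq hu fun T hT =>
    integral_one_sub_div_sq_of_renewal hT.le (hint T hT.le) fun t ht => hrenewal t ht.1

/-- For the CDF `F` solving the renewal equation, `t(1 - F(t)) → 1` as `t → ∞`. -/
theorem tail_asymptotic
    (F F' : ℝ → ℝ)
    (hmono : ∀ a b : ℝ, 0 ≤ a → a ≤ b → F a ≤ F b)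
    (hzero : F 0 = 0)
    (hlim : Filter.Tendsto F atTop (nhds 1))
    (hderiv : ∀ t, 0 ≤ t → HasDerivWithinAt F (F' t) (Ici 0) t)
    (hcont : ContinuousOn F' (Ici 0))
    (hrenewal : ∀ t, 0 ≤ t →
      F t = 2 * t / (1 + t) ^ 3 + ∫ y in (0:ℝ)..t, 2 / (1 + (t - y)) ^ 3 * F y) :
    Filter.Tendsto (fun t : ℝ => t * (1 - F t)) atTop (nhds 1) :=
  tail_asymptotic_general F hmono hrenewal
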